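/- Let E and F be Dedekind complete Riesz spaces with weak order units e and f. Let (p_n) be a sequence of components of e and (q_n) a sequence of components of f. If (p_n) is of density zero (i.e., (1/n)·∑_{k=0}^{n-1} p_k order converges to 0), then (p_n ⊗ q_n) is a density zero sequence of components of e ⊗ f in the Dedekind completion of the Fremlin tensor product E ⊗̄ F. -/

import Mathlib

/-!
A component `p ⊗ q` of `e ⊗ f` is dominated by `p ⊗ f`, so the Cesàro means of `(p_n ⊗ q_n)`
lie between `0` and `(Cesàro mean of p_n) ⊗ f`, which order converges to `0 ⊗ f = 0` by order
continuity of `⊗`. That `p ⊗ q` is a component follows from the splitting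
`e ⊗ f - p ⊗ q = (e - p) ⊗ q + e ⊗ (f - q)` into two pieces disjoint from `p ⊗ q`.
-/

open Finset

section Defs

variable {E : Type*} [ConditionallyCompleteLattice E] [AddCommGroup E] [Module ℝ E]
  [CovariantClass E E (· + ·) (· ≤ ·)]

/-- Order convergence of a sequence: there is a sequence `u ↓ 0` dominating the tails. -/
def OrderConvergesTo (f : ℕ → E) (x : E) : Prop :=
  ∃ u : ℕ → E, Antitone u ∧ IsGLB (Set.range u) (0 : E) ∧
    ∀ m : ℕ, ∃ N : ℕ, ∀ n ≥ N, |f n - x| ≤ u m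

/-- `p` is a component of `e`. -/
def IsComponent (e p : E) : Prop := 0 ≤ p ∧ p ≤ e ∧ p ⊓ (e - p) = 0

/-- A sequence of components is of density zero if its Cesàro means order converge to `0`. -/
def DensityZero (p : ℕ → E) : Prop :=
  OrderConvergesTo (fun n => (n : ℝ)⁻¹ • ∑ k ∈ Finset.range n, p k) (0 : E)

/-- The band projection (onto the band generated by `p`) applied to a positive element `f`. -/
noncomputable def bandProj (p f : E) : E :=
  sSup (Set.range fun n : ℕ => f ⊓ (n : ℝ) • p)

end Defs

section Systems

variable (E : Type*) [ConditionallyCompleteLattice E] [AddCommGroup E] [Module ℝ E]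
  [CovariantClass E E (· + ·) (· ≤ ·)]

/-- The data of a conditional expectation preserving system, without the
intertwining identity `T S = T`: a Dedekind complete Riesz space with weak order unit `e`,
the `f`-algebra multiplication of `E_e` (with unit `e`), a strictly-positive-free
conditional expectation operator `T` with `T e = e`, and a Riesz homomorphism `S`
with `S e = e`. -/
structure PreCEPS where
  e : E
  e_pos : 0 < e
  weakUnit : ∀ x : E, e ⊓ |x| = 0 → x = 0
  /-- the `f`-algebra multiplication (of the ideal generated by `e`) -/
  mul : E →ₗ[ℝ] E →ₗ[ℝ] E
  mul_comm' : ∀ x y, mul x y = mul y x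
  mul_pos' : ∀ x y, 0 ≤ x → 0 ≤ y → 0 ≤ mul x y
  one_mul' : ∀ x, mul e x = x
  finf' : ∀ x y z, x ⊓ y = 0 → 0 ≤ z → (mul x z) ⊓ y = 0
  /-- the conditional expectation operator -/
  T : E →ₗ[ℝ] E
  T_pos : ∀ x, 0 ≤ x → 0 ≤ T x
  T_proj : ∀ x, T (T x) = T x
  T_e : T e = e
  T_oc : ∀ (s : Set E) (x : E), s.Nonempty → DirectedOn (· ≤ ·) s → IsLUB s x →
    IsLUB (T '' s) (T x)
  T_range_closed : ∀ (s : Set E) (x : E), (∀ y ∈ s, T y = y) → IsLUB s x → T x = x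
  /-- the Riesz homomorphism -/
  S : E →ₗ[ℝ] E
  S_sup : ∀ x y, S (x ⊔ y) = S x ⊔ S y
  S_e : S e = e

/-- A conditional expectation preserving system. -/
structure CEPS extends PreCEPS E where
  TS : ∀ x, T (S x) = T x

variable {E}

/-- Strict positivity of the conditional expectation operator of a system. -/
def CEPS.StrictPos (A : CEPS E) : Prop := ∀ x : E, 0 ≤ x → A.T x = 0 → x = 0

/-- Ergodicity, characterised by Cesàro convergence of
`T((S^k p)·q)` to `Tp·Tq` for all components `p, q` of `e`. -/
def CEPS.Ergodic (A : CEPS E) : Prop :=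
  ∀ p q : E, IsComponent A.e p → IsComponent A.e q →
    OrderConvergesTo
      (fun n => (n : ℝ)⁻¹ • ∑ k ∈ Finset.range n, A.T (A.mul ((A.S ^ k) p) q))
      (A.mul (A.T p) (A.T q))

/-- Conditional weak mixing. -/
def CEPS.WeakMixing (A : CEPS E) : Prop :=
  ∀ p q : E, IsComponent A.e p → IsComponent A.e q →
    OrderConvergesTo
      (fun n => (n : ℝ)⁻¹ • ∑ k ∈ Finset.range n,
        |A.T (A.mul ((A.S ^ k) p) q) - A.mul (A.T p) (A.T q)|) (0 : E)

end Systems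

section Tensor

variable {E F G : Type*}
  [ConditionallyCompleteLattice E] [AddCommGroup E] [Module ℝ E]
  [CovariantClass E E (· + ·) (· ≤ ·)]
  [ConditionallyCompleteLattice F] [AddCommGroup F] [Module ℝ F]
  [CovariantClass F F (· + ·) (· ≤ ·)]
  [ConditionallyCompleteLattice G] [AddCommGroup G] [Module ℝ G]
  [CovariantClass G G (· + ·) (· ≤ ·)]

/-- A realisation of the Dedekind completion of the Fremlin tensor product of the
underlying spaces of two conditional expectation preserving systems, carrying the
pre-system structure (Grobler's tensor product conditional expectation and the tensor
product Riesz homomorphism), but without the intertwining identity for the product. -/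
structure TensorPreCEPS (A : CEPS E) (B : CEPS F) (G : Type*)
    [ConditionallyCompleteLattice G] [AddCommGroup G] [Module ℝ G]
    [CovariantClass G G (· + ·) (· ≤ ·)] where
  sys : PreCEPS G
  tmul : E →ₗ[ℝ] F →ₗ[ℝ] G
  tmul_pos : ∀ x y, 0 ≤ x → 0 ≤ y → 0 ≤ tmul x y
  e_def : sys.e = tmul A.e B.e
  T_tmul : ∀ x y, sys.T (tmul x y) = tmul (A.T x) (B.T y)
  S_tmul : ∀ x y, sys.S (tmul x y) = tmul (A.S x) (B.S y)
  mul_tmul : ∀ x y x' y',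
    sys.mul (tmul x y) (tmul x' y') = tmul (A.mul x x') (B.mul y y')
  comp_dense : ∀ u : G, IsComponent sys.e u →
    IsLUB {w : G | ∃ p q, IsComponent A.e p ∧ IsComponent B.e q ∧
      tmul p q ≤ u ∧ w = tmul p q} u
  tmul_oc_left : ∀ (x : ℕ → E) (a : E) (y : F), 0 ≤ y →
    OrderConvergesTo x a → OrderConvergesTo (fun n => tmul (x n) y) (tmul a y)
  tmul_oc_right : ∀ (x : E) (y : ℕ → F) (b : F), 0 ≤ x →
    OrderConvergesTo y b → OrderConvergesTo (fun n => tmul x (y n)) (tmul x b)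

/-- As `TensorPreCEPS`, but where the tensor product system is a full conditional
expectation preserving system. -/
structure TensorCEPS (A : CEPS E) (B : CEPS F) (G : Type*)
    [ConditionallyCompleteLattice G] [AddCommGroup G] [Module ℝ G]
    [CovariantClass G G (· + ·) (· ≤ ·)] where
  sys : CEPS G
  tmul : E →ₗ[ℝ] F →ₗ[ℝ] G
  tmul_pos : ∀ x y, 0 ≤ x → 0 ≤ y → 0 ≤ tmul x y
  e_def : sys.e = tmul A.e B.e
  T_tmul : ∀ x y, sys.T (tmul x y) = tmul (A.T x) (B.T y)
  S_tmul : ∀ x y, sys.S (tmul x y) = tmul (A.S x) (B.S y)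
  mul_tmul : ∀ x y x' y',
    sys.mul (tmul x y) (tmul x' y') = tmul (A.mul x x') (B.mul y y')
  comp_dense : ∀ u : G, IsComponent sys.e u →
    IsLUB {w : G | ∃ p q, IsComponent A.e p ∧ IsComponent B.e q ∧
      tmul p q ≤ u ∧ w = tmul p q} u
  tmul_oc_left : ∀ (x : ℕ → E) (a : E) (y : F), 0 ≤ y →
    OrderConvergesTo x a → OrderConvergesTo (fun n => tmul (x n) y) (tmul a y)
  tmul_oc_right : ∀ (x : E) (y : ℕ → F) (b : F), 0 ≤ x →
    OrderConvergesTo y b → OrderConvergesTo (fun n => tmul x (y n)) (tmul x b)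

end Tensor

section LatticeAddGroup

variable {α : Type*} [Lattice α] [AddCommGroup α] [AddLeftMono α]

theorem inf_add_eq_zero {a b c : α} (hb : 0 ≤ b) (hc : 0 ≤ c) (hab : a ⊓ b = 0)
    (hac : a ⊓ c = 0) : a ⊓ (b + c) = 0 := by
  have ha : 0 ≤ a := hab ▸ inf_le_left
  have hle : a ⊓ (b + c) ≤ c :=
    calc a ⊓ (b + c) ≤ (a + c) ⊓ (b + c) := inf_le_inf_right _ (le_add_of_nonneg_right hc)
      _ = a ⊓ b + c := (inf_add a b c).symm
      _ = c := by rw [hab, zero_add]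
  exact le_antisymm (hac ▸ le_inf inf_le_left hle) (le_inf ha (add_nonneg hb hc))

theorem inf_nsmul_eq_zero {a b : α} (hb : 0 ≤ b) (hab : a ⊓ b = 0) (n : ℕ) :
    a ⊓ n • b = 0 := by
  induction n with
  | zero => simpa using inf_eq_right.2 (hab ▸ inf_le_left : 0 ≤ a)
  | succ k ih => rw [succ_nsmul]; exact inf_add_eq_zero (nsmul_nonneg hb k) hb ih hab

theorem nonneg_of_nsmul_nonneg {a : α} {n : ℕ} (hn : n ≠ 0) (h : 0 ≤ n • a) : 0 ≤ a := by
  -- `a⁻ ≤ n • a⁻ ≤ n • a⁺` while `a⁻` is disjoint from `n • a⁺`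
  have hle : a⁻ ≤ n • a⁺ := by
    have : n • a⁻ ≤ n • a⁺ := by rwa [← sub_nonneg, ← nsmul_sub, posPart_sub_negPart]
    exact (le_self_nsmul (negPart_nonneg a) hn).trans this
  have hdisj : a⁻ ⊓ n • a⁺ = 0 :=
    inf_nsmul_eq_zero (posPart_nonneg a) (by rw [inf_comm, posPart_inf_negPart_eq_zero]) n
  rw [← posPart_sub_negPart a, ← inf_eq_left.2 hle, hdisj, sub_zero]
  exact posPart_nonneg a

variable [Module ℝ α]

theorem inv_natCast_smul_nonneg {a : α} (ha : 0 ≤ a) (n : ℕ) : 0 ≤ (n : ℝ)⁻¹ • a := by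
  rcases eq_or_ne n 0 with rfl | hn
  · simp
  · refine nonneg_of_nsmul_nonneg hn ?_
    rwa [← Nat.cast_smul_eq_nsmul ℝ, smul_smul, mul_inv_cancel₀ (Nat.cast_ne_zero.2 hn),
      one_smul]

theorem inv_natCast_smul_le_smul {a b : α} (hab : a ≤ b) (n : ℕ) :
    (n : ℝ)⁻¹ • a ≤ (n : ℝ)⁻¹ • b := by
  rw [← sub_nonneg, ← smul_sub]
  exact inv_natCast_smul_nonneg (sub_nonneg.2 hab) n

end LatticeAddGroup

theorem OrderConvergesTo.zero_of_abs_le {E : Type*} [ConditionallyCompleteLattice E]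
    [AddCommGroup E] [Module ℝ E] [AddLeftMono E] {g h : ℕ → E}
    (hh : OrderConvergesTo h 0) (hgh : ∀ n, |g n| ≤ |h n|) : OrderConvergesTo g 0 := by
  obtain ⟨u, hu_anti, hu_glb, hu⟩ := hh
  refine ⟨u, hu_anti, hu_glb, fun m => ?_⟩
  obtain ⟨N, hN⟩ := hu m
  exact ⟨N, fun n hn => by simpa using (hgh n).trans (by simpa using hN n hn)⟩

section Bilinear

variable {E F G : Type*}
  [ConditionallyCompleteLattice E] [AddCommGroup E] [Module ℝ E]
  [ConditionallyCompleteLattice F] [AddCommGroup F] [Module ℝ F] [AddLeftMono F]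
  [ConditionallyCompleteLattice G] [AddCommGroup G] [Module ℝ G] [AddLeftMono G]
  (B : E →ₗ[ℝ] F →ₗ[ℝ] G) (hpos : ∀ x y, 0 ≤ x → 0 ≤ y → 0 ≤ B x y)
include hpos

theorem IsComponent.map_bilinear [AddLeftMono E]
    (hinfl : ∀ (x x' : E) (y : F), 0 ≤ y → B (x ⊓ x') y = B x y ⊓ B x' y)
    (hinfr : ∀ (x : E) (y y' : F), 0 ≤ x → B x (y ⊓ y') = B x y ⊓ B x y')
    {e p : E} {f q : F} (hp : IsComponent e p) (hq : IsComponent f q) :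
    IsComponent (B e f) (B p q) := by
  obtain ⟨hp0, hpe, hpd⟩ := hp
  obtain ⟨hq0, hqf, hqd⟩ := hq
  have hb : 0 ≤ B (e - p) q := hpos _ _ (sub_nonneg.2 hpe) hq0
  have hc : 0 ≤ B e (f - q) := hpos _ _ (hp0.trans hpe) (sub_nonneg.2 hqf)
  have hsplit : B e f - B p q = B (e - p) q + B e (f - q) := by
    simp only [map_sub, LinearMap.sub_apply]
    abel
  have hdisj_left : B p q ⊓ B (e - p) q = 0 := by
    rw [← hinfl _ _ _ hq0, hpd, map_zero, LinearMap.zero_apply]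
  have hdisj_right : B p q ⊓ B e (f - q) = 0 := by
    have hle : B p q ≤ B e q := by
      simpa only [map_sub, LinearMap.sub_apply, sub_nonneg] using hb
    have : B e q ⊓ B e (f - q) = 0 := by rw [← hinfr _ _ _ (hp0.trans hpe), hqd, map_zero]
    exact le_antisymm (this ▸ inf_le_inf_right _ hle) (le_inf (hpos _ _ hp0 hq0) hc)
  refine ⟨hpos _ _ hp0 hq0, ?_, ?_⟩
  · rw [← sub_nonneg, hsplit]
    exact add_nonneg hb hc
  · rw [hsplit]
    exact inf_add_eq_zero hb hc hdisj_left hdisj_right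

theorem abs_cesaro_map_bilinear_le {e : E} {f : F} {p : ℕ → E} {q : ℕ → F}
    (hp : ∀ k, IsComponent e (p k)) (hq : ∀ k, IsComponent f (q k)) (n : ℕ) :
    |(n : ℝ)⁻¹ • ∑ k ∈ range n, B (p k) (q k)| ≤ |B ((n : ℝ)⁻¹ • ∑ k ∈ range n, p k) f| := by
  have hnonneg : 0 ≤ (n : ℝ)⁻¹ • ∑ k ∈ range n, B (p k) (q k) :=
    inv_natCast_smul_nonneg (sum_nonneg fun k _ => hpos _ _ (hp k).1 (hq k).1) n
  have hle : ∑ k ∈ range n, B (p k) (q k) ≤ ∑ k ∈ range n, B (p k) f := by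
    refine sum_le_sum fun k _ => ?_
    rw [← sub_nonneg, ← map_sub]
    exact hpos _ _ (hp k).1 (sub_nonneg.2 (hq k).2.1)
  rw [abs_of_nonneg hnonneg, map_smul, map_sum, LinearMap.smul_apply, LinearMap.sum_apply]
  exact (inv_natCast_smul_le_smul hle n).trans (le_abs_self _)

end Bilinear

theorem tmul_densityZero_general
    {E F G : Type*}
    [ConditionallyCompleteLattice E] [AddCommGroup E] [Module ℝ E]
    [CovariantClass E E (· + ·) (· ≤ ·)]
    [ConditionallyCompleteLattice F] [AddCommGroup F] [Module ℝ F]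
    [CovariantClass F F (· + ·) (· ≤ ·)]
    [ConditionallyCompleteLattice G] [AddCommGroup G] [Module ℝ G]
    [CovariantClass G G (· + ·) (· ≤ ·)]
    (e : E)
    (f : F) (hf : 0 < f)
    (tmul : E →ₗ[ℝ] F →ₗ[ℝ] G)
    (hpos : ∀ x y, 0 ≤ x → 0 ≤ y → 0 ≤ tmul x y)
    (hinfl : ∀ (x x' : E) (y : F), 0 ≤ y → tmul (x ⊓ x') y = tmul x y ⊓ tmul x' y)
    (hinfr : ∀ (x : E) (y y' : F), 0 ≤ x → tmul x (y ⊓ y') = tmul x y ⊓ tmul x y')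
    -- order continuity of the bilinear tensor map
    (hoc : ∀ (x : ℕ → E) (a : E) (y : F), 0 ≤ y →
      OrderConvergesTo x a → OrderConvergesTo (fun n => tmul (x n) y) (tmul a y))
    (p : ℕ → E) (q : ℕ → F)
    (hp : ∀ n, IsComponent e (p n)) (hq : ∀ n, IsComponent f (q n))
    (hdz : DensityZero p) :
    (∀ n, IsComponent (tmul e f) (tmul (p n) (q n))) ∧
      DensityZero (fun n => tmul (p n) (q n)) := by
  refine ⟨fun n => (hp n).map_bilinear tmul hpos hinfl hinfr (hq n), ?_⟩
  have hmeans : OrderConvergesTo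
      (fun n => tmul ((n : ℝ)⁻¹ • ∑ k ∈ range n, p k) f) 0 := by
    simpa only [map_zero, LinearMap.zero_apply] using hoc _ 0 f hf.le hdz
  exact hmeans.zero_of_abs_le (abs_cesaro_map_bilinear_le tmul hpos hp hq)

/-- if `(p_n)` is a density zero sequence of components of `e` and `(q_n)`
a sequence of components of `f`, then `(p_n ⊗ q_n)` is a density zero sequence of
components of `e ⊗ f` in the Dedekind completion of the Fremlin tensor product. -/
theorem tmul_densityZero
    {E F G : Type*}
    [ConditionallyCompleteLattice E] [AddCommGroup E] [Module ℝ E]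
    [CovariantClass E E (· + ·) (· ≤ ·)]
    [ConditionallyCompleteLattice F] [AddCommGroup F] [Module ℝ F]
    [CovariantClass F F (· + ·) (· ≤ ·)]
    [ConditionallyCompleteLattice G] [AddCommGroup G] [Module ℝ G]
    [CovariantClass G G (· + ·) (· ≤ ·)]
    (e : E) (he : 0 < e) (hwuE : ∀ x : E, e ⊓ |x| = 0 → x = 0)
    (f : F) (hf : 0 < f) (hwuF : ∀ y : F, f ⊓ |y| = 0 → y = 0)
    (tmul : E →ₗ[ℝ] F →ₗ[ℝ] G)
    (hpos : ∀ x y, 0 ≤ x → 0 ≤ y → 0 ≤ tmul x y)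
    (hinfl : ∀ (x x' : E) (y : F), 0 ≤ y → tmul (x ⊓ x') y = tmul x y ⊓ tmul x' y)
    (hinfr : ∀ (x : E) (y y' : F), 0 ≤ x → tmul x (y ⊓ y') = tmul x y ⊓ tmul x y')
    -- order continuity of the bilinear tensor map
    (hoc : ∀ (x : ℕ → E) (a : E) (y : F), 0 ≤ y →
      OrderConvergesTo x a → OrderConvergesTo (fun n => tmul (x n) y) (tmul a y))
    (p : ℕ → E) (q : ℕ → F)
    (hp : ∀ n, IsComponent e (p n)) (hq : ∀ n, IsComponent f (q n))
    (hdz : DensityZero p) :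
    (∀ n, IsComponent (tmul e f) (tmul (p n) (q n))) ∧
      DensityZero (fun n => tmul (p n) (q n)) :=
  tmul_densityZero_general e f hf tmul hpos hinfl hinfr hoc p q hp hq hdz
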